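/- arXiv:2008.07390 — 6 statements merged into one kernel-verified Lean document; each statement's English description precedes it below -/
import Mathlib

section
/- Let M be a smooth n-manifold and let σ, ν : M → ℝ^{n+2} be an immersion of M into ℍ^{n+1} with unit normal ν having small principal curvatures. Then for every t ∈ ℝ the normal evolution σ_t = cosh(t)σ + sinh(t)ν is again an immersion of M into ℍ^{n+1} (i.e. d_p σ_t is injective for every p, ⟨σ_t,σ_t⟩ = −1 and (σ_t)_{n+2} > 0), the map ν_t = sinh(t)σ + cosh(t)ν is a unit normal for σ_t, and σ_t has small principal curvatures: ⟨d_pν_t(v), d_pν_t(v)⟩ < ⟨d_pσ_t(v), d_pσ_t(v)⟩ for every p and every nonzero v ∈ T_pM. -/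
open scoped Manifold

/-- The Minkowski bilinear form on `ℝ^{n+2}`:
`⟨x,y⟩ = x₁y₁ + ⋯ + x_{n+1}y_{n+1} − x_{n+2}y_{n+2}`. -/
noncomputable def mink (n : ℕ) (x y : Fin (n + 2) → ℝ) : ℝ :=
  (∑ i : Fin (n + 1), x i.castSucc * y i.castSucc) -
    x (Fin.last (n + 1)) * y (Fin.last (n + 1))

/-!
The normal evolution acts on the frame `(σ, ν)` and on the differentials `(dσ, dν)` by the same
hyperbolic rotation `(x, y) ↦ (cosh t • x + sinh t • y, sinh t • x + cosh t • y)`. This rotation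
preserves `⟨x, x⟩ - ⟨y, y⟩`, so `(σ_t, ν_t)` is again a Minkowski-orthonormal frame and
`I_t - III_t = I - III` stays positive definite. Since `dν_t v` is orthogonal to the timelike
vector `σ_t`, reverse Cauchy–Schwarz gives `0 ≤ III_t(v) < I_t(v)` for `v ≠ 0`, so `dσ_t` is
injective. Finally `⟨σ, σ_t⟩ = -cosh t < 0`, and timelike vectors with negative pairing lie in the
same half of the light cone, which keeps the last coordinate positive.
-/

section

variable {n : ℕ}

lemma mink_comm (x y : Fin (n + 2) → ℝ) : mink n x y = mink n y x := by
  simp only [mink, mul_comm]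

variable (n) in
lemma isBilinearMap_mink : IsBilinearMap ℝ (mink n) where
  add_left x₁ x₂ y := by simp only [mink, Pi.add_apply, add_mul, Finset.sum_add_distrib]; ring
  smul_left c x y := by
    simp only [mink, Pi.smul_apply, smul_eq_mul, mul_assoc, ← Finset.mul_sum]; ring
  add_right x y₁ y₂ := by simp only [mink, Pi.add_apply, mul_add, Finset.sum_add_distrib]; ring
  smul_right c x y := by
    simp only [mink, Pi.smul_apply, smul_eq_mul, mul_left_comm _ c, ← Finset.mul_sum]; ring

lemma mink_smul_add_smul (a b c d : ℝ) (x y z w : Fin (n + 2) → ℝ) :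
    mink n (a • x + b • y) (c • z + d • w) =
      a * c * mink n x z + a * d * mink n x w + b * c * mink n y z + b * d * mink n y w := by
  have h := isBilinearMap_mink n
  simp only [h.add_left, h.add_right, h.smul_left, h.smul_right, smul_eq_mul]
  ring

lemma mink_zero_zero : mink n 0 0 = 0 := by
  simp [mink]

lemma mink_smul_add_smul_eq_zero {x y z w : Fin (n + 2) → ℝ} (hxz : mink n x z = 0)
    (hxw : mink n x w = 0) (hyz : mink n y z = 0) (hyw : mink n y w = 0) (a b c d : ℝ) :
    mink n (a • x + b • y) (c • z + d • w) = 0 := by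
  simp [mink_smul_add_smul, hxz, hxw, hyz, hyw]

lemma mink_self_add_sq_last (x : Fin (n + 2) → ℝ) :
    mink n x x + x (Fin.last (n + 1)) ^ 2 = ∑ i : Fin (n + 1), x i.castSucc ^ 2 := by
  simp only [mink, sq]; ring

lemma mink_add_mul_last_sq_le (x y : Fin (n + 2) → ℝ) :
    (mink n x y + x (Fin.last (n + 1)) * y (Fin.last (n + 1))) ^ 2 ≤
      (mink n x x + x (Fin.last (n + 1)) ^ 2) * (mink n y y + y (Fin.last (n + 1)) ^ 2) := by
  rw [mink_self_add_sq_last, mink_self_add_sq_last, mink, sub_add_cancel]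
  exact Finset.sum_mul_sq_le_sq_mul_sq _ _ _

lemma mink_self_add_sq_last_nonneg (x : Fin (n + 2) → ℝ) :
    0 ≤ mink n x x + x (Fin.last (n + 1)) ^ 2 := by
  rw [mink_self_add_sq_last]; positivity

lemma mink_self_nonneg_of_mink_eq_zero {x w : Fin (n + 2) → ℝ} (hx : mink n x x < 0)
    (hxw : mink n x w = 0) : 0 ≤ mink n w w := by
  have hcs := mink_add_mul_last_sq_le x w
  rw [hxw, zero_add] at hcs
  nlinarith [mink_self_add_sq_last_nonneg x,
    mul_nonpos_of_nonneg_of_nonpos (mink_self_add_sq_last_nonneg w) hx.le]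

lemma last_pos_of_mink_neg {x y : Fin (n + 2) → ℝ} (hx : mink n x x ≤ 0) (hy : mink n y y ≤ 0)
    (hxy : mink n x y < 0) (hxL : 0 < x (Fin.last (n + 1))) : 0 < y (Fin.last (n + 1)) := by
  by_contra! h
  nlinarith [mink_add_mul_last_sq_le x y, mink_self_add_sq_last_nonneg x,
    mink_self_add_sq_last_nonneg y, mul_nonpos_of_nonneg_of_nonpos hxL.le h]

lemma mink_cosh_smul_add_sinh_smul_sub (t : ℝ) (x y : Fin (n + 2) → ℝ) :
    mink n (Real.cosh t • x + Real.sinh t • y) (Real.cosh t • x + Real.sinh t • y) -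
        mink n (Real.sinh t • x + Real.cosh t • y) (Real.sinh t • x + Real.cosh t • y) =
      mink n x x - mink n y y := by
  rw [mink_smul_add_smul, mink_smul_add_smul]
  linear_combination (mink n x x - mink n y y) * Real.cosh_sq_sub_sinh_sq t

lemma mink_cosh_smul_add_sinh_smul_of_orthonormal {x y : Fin (n + 2) → ℝ} (hx : mink n x x = -1)
    (hy : mink n y y = 1) (hxy : mink n x y = 0) (t : ℝ) :
    mink n (Real.cosh t • x + Real.sinh t • y) (Real.cosh t • x + Real.sinh t • y) = -1 ∧
      mink n (Real.sinh t • x + Real.cosh t • y) (Real.sinh t • x + Real.cosh t • y) = 1 ∧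
      mink n (Real.cosh t • x + Real.sinh t • y) (Real.sinh t • x + Real.cosh t • y) = 0 := by
  have hyx : mink n y x = 0 := by rw [mink_comm, hxy]
  simp only [mink_smul_add_smul, hx, hy, hxy, hyx]
  have h := Real.cosh_sq_sub_sinh_sq t
  exact ⟨by linear_combination -h, by linear_combination h, by ring⟩

lemma last_cosh_smul_add_sinh_smul_pos {x y : Fin (n + 2) → ℝ} (hx : mink n x x = -1)
    (hy : mink n y y = 1) (hxy : mink n x y = 0) (hxL : 0 < x (Fin.last (n + 1))) (t : ℝ) :
    0 < (Real.cosh t • x + Real.sinh t • y) (Fin.last (n + 1)) := by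
  refine last_pos_of_mink_neg (by linarith)
    ((mink_cosh_smul_add_sinh_smul_of_orthonormal hx hy hxy t).1.trans_le (by norm_num)) ?_ hxL
  simp only [(isBilinearMap_mink n).add_right, (isBilinearMap_mink n).smul_right, hx, hxy,
    smul_eq_mul]
  linarith [Real.cosh_pos t]

lemma injective_of_mink_self_lt {V : Type*} [AddCommGroup V] [Module ℝ V]
    {S N : V →ₗ[ℝ] Fin (n + 2) → ℝ} {x : Fin (n + 2) → ℝ} (hx : mink n x x < 0)
    (hxN : ∀ v, mink n x (N v) = 0) (hNS : ∀ v, v ≠ 0 → mink n (N v) (N v) < mink n (S v) (S v)) :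
    Function.Injective S := by
  refine (injective_iff_map_eq_zero S).2 fun v hv ↦ by_contra fun hv0 ↦ ?_
  have hlt := hNS v hv0
  rw [hv, mink_zero_zero] at hlt
  exact hlt.not_ge (mink_self_nonneg_of_mink_eq_zero hx (hxN v))

section Manifold

variable {E H M : Type*} [NormedAddCommGroup E] [NormedSpace ℝ E] [TopologicalSpace H]
  {I : ModelWithCorners ℝ E H} [TopologicalSpace M] [ChartedSpace H M]
  {f g : M → Fin (n + 2) → ℝ} {f' g' : E →L[ℝ] Fin (n + 2) → ℝ} {p : M}

theorem hasMFDerivAt_mink (hf : HasMFDerivAt I 𝓘(ℝ, Fin (n + 2) → ℝ) f p f')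
    (hg : HasMFDerivAt I 𝓘(ℝ, Fin (n + 2) → ℝ) g p g') :
    HasMFDerivAt I 𝓘(ℝ, ℝ) (fun q ↦ mink n (f q) (g q)) p
      ((isBilinearMap_mink n).toContinuousBilinearMap.flip (g p) ∘L f' +
        (isBilinearMap_mink n).toContinuousBilinearMap (f p) ∘L g') := by
  let B := (isBilinearMap_mink n).toContinuousBilinearMap
  refine ((B.isBoundedBilinearMap.hasFDerivAt (f p, g p)).hasMFDerivAt.comp p
    (hf.prodMk hg)).congr_mfderiv ?_
  ext v
  change B.isBoundedBilinearMap.deriv (f p, g p) (f' v, g' v) = _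
  rw [IsBoundedBilinearMap.deriv_apply]
  exact add_comm _ _

theorem HasMFDerivAt.mink_add_mink_eq_zero_of_const
    (hf : HasMFDerivAt I 𝓘(ℝ, Fin (n + 2) → ℝ) f p f')
    (hg : HasMFDerivAt I 𝓘(ℝ, Fin (n + 2) → ℝ) g p g') {r : ℝ}
    (hc : ∀ q, mink n (f q) (g q) = r) (v : E) :
    mink n (f' v) (g p) + mink n (f p) (g' v) = 0 := by
  have h := (hasMFDerivAt_mink hf hg).mfderiv
  rw [funext hc, mfderiv_const] at h
  exact congr($h v).symm

theorem HasMFDerivAt.mink_self_eq_zero_of_const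
    (hf : HasMFDerivAt I 𝓘(ℝ, Fin (n + 2) → ℝ) f p f') {r : ℝ} (hc : ∀ q, mink n (f q) (f q) = r)
    (v : E) : mink n (f' v) (f p) = 0 := by
  linarith [hf.mink_add_mink_eq_zero_of_const hf hc v, mink_comm (f p) (f' v)]

theorem HasMFDerivAt.mink_smul_add_smul_apply_eq_zero
    (hf : HasMFDerivAt I 𝓘(ℝ, Fin (n + 2) → ℝ) f p f')
    (hg : HasMFDerivAt I 𝓘(ℝ, Fin (n + 2) → ℝ) g p g') {r₁ r₂ r₃ : ℝ}
    (hff : ∀ q, mink n (f q) (f q) = r₁) (hgg : ∀ q, mink n (g q) (g q) = r₂)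
    (hfg : ∀ q, mink n (f q) (g q) = r₃) (hf'g : ∀ v, mink n (f' v) (g p) = 0)
    (v : E) (a b c d : ℝ) :
    mink n (a • f' v + b • g' v) (c • f p + d • g p) = 0 := by
  have hg'f : mink n (g' v) (f p) = 0 := by
    linarith [hf.mink_add_mink_eq_zero_of_const hg hfg v, hf'g v, mink_comm (f p) (g' v)]
  exact mink_smul_add_smul_eq_zero (hf.mink_self_eq_zero_of_const hff v) (hf'g v) hg'f
    (hg.mink_self_eq_zero_of_const hgg v) ..

theorem HasMFDerivAt.mfderiv_smul_add_smul
    (hf : HasMFDerivAt I 𝓘(ℝ, Fin (n + 2) → ℝ) f p f')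
    (hg : HasMFDerivAt I 𝓘(ℝ, Fin (n + 2) → ℝ) g p g') (a b : ℝ) :
    mfderiv I 𝓘(ℝ, Fin (n + 2) → ℝ) (fun q ↦ a • f q + b • g q) p = a • f' + b • g' :=
  ((hf.const_smul a).add (hg.const_smul b)).mfderiv

end Manifold

end

theorem normal_evolution_small_principal_curvatures_general
    {n : ℕ} {M : Type*} [TopologicalSpace M]
    [ChartedSpace (EuclideanSpace ℝ (Fin n)) M]
    (σ ν : M → Fin (n + 2) → ℝ)
    (hσ : ContMDiff (𝓡 n) 𝓘(ℝ, Fin (n + 2) → ℝ) (⊤ : ℕ∞) σ)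
    (hν : ContMDiff (𝓡 n) 𝓘(ℝ, Fin (n + 2) → ℝ) (⊤ : ℕ∞) ν)
    (hσσ : ∀ p, mink n (σ p) (σ p) = -1)
    (hpos : ∀ p, 0 < σ p (Fin.last (n + 1)))
    (hνν : ∀ p, mink n (ν p) (ν p) = 1)
    (hσν : ∀ p, mink n (σ p) (ν p) = 0)
    (hnormal : ∀ p (v : EuclideanSpace ℝ (Fin n)),
      mink n (mfderiv (𝓡 n) 𝓘(ℝ, Fin (n + 2) → ℝ) σ p v) (ν p) = 0)
    (hsmall : ∀ p (v : EuclideanSpace ℝ (Fin n)), v ≠ 0 →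
      mink n (mfderiv (𝓡 n) 𝓘(ℝ, Fin (n + 2) → ℝ) ν p v)
          (mfderiv (𝓡 n) 𝓘(ℝ, Fin (n + 2) → ℝ) ν p v) <
        mink n (mfderiv (𝓡 n) 𝓘(ℝ, Fin (n + 2) → ℝ) σ p v)
          (mfderiv (𝓡 n) 𝓘(ℝ, Fin (n + 2) → ℝ) σ p v)) :
    ∀ (t : ℝ) (p : M),
      mink n (Real.cosh t • σ p + Real.sinh t • ν p)
        (Real.cosh t • σ p + Real.sinh t • ν p) = -1 ∧
      0 < (Real.cosh t • σ p + Real.sinh t • ν p) (Fin.last (n + 1)) ∧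
      Function.Injective (mfderiv (𝓡 n) 𝓘(ℝ, Fin (n + 2) → ℝ)
        (fun q => Real.cosh t • σ q + Real.sinh t • ν q) p) ∧
      mink n (Real.sinh t • σ p + Real.cosh t • ν p)
        (Real.sinh t • σ p + Real.cosh t • ν p) = 1 ∧
      mink n (Real.cosh t • σ p + Real.sinh t • ν p)
        (Real.sinh t • σ p + Real.cosh t • ν p) = 0 ∧
      (∀ v : EuclideanSpace ℝ (Fin n),
        mink n (mfderiv (𝓡 n) 𝓘(ℝ, Fin (n + 2) → ℝ)
            (fun q => Real.cosh t • σ q + Real.sinh t • ν q) p v)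
          (Real.sinh t • σ p + Real.cosh t • ν p) = 0) ∧
      (∀ v : EuclideanSpace ℝ (Fin n), v ≠ 0 →
        mink n (mfderiv (𝓡 n) 𝓘(ℝ, Fin (n + 2) → ℝ)
            (fun q => Real.sinh t • σ q + Real.cosh t • ν q) p v)
          (mfderiv (𝓡 n) 𝓘(ℝ, Fin (n + 2) → ℝ)
            (fun q => Real.sinh t • σ q + Real.cosh t • ν q) p v) <
        mink n (mfderiv (𝓡 n) 𝓘(ℝ, Fin (n + 2) → ℝ)
            (fun q => Real.cosh t • σ q + Real.sinh t • ν q) p v)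
          (mfderiv (𝓡 n) 𝓘(ℝ, Fin (n + 2) → ℝ)
            (fun q => Real.cosh t • σ q + Real.sinh t • ν q) p v)) := by
  intro t p
  -- Retyped as maps into `Fin (n + 2) → ℝ` rather than into tangent spaces, so that all the
  -- evaluations `A v`, `B v` below use one and the same coercion.
  let A : EuclideanSpace ℝ (Fin n) →L[ℝ] Fin (n + 2) → ℝ :=
    mfderiv (𝓡 n) 𝓘(ℝ, Fin (n + 2) → ℝ) σ p
  let B : EuclideanSpace ℝ (Fin n) →L[ℝ] Fin (n + 2) → ℝ :=
    mfderiv (𝓡 n) 𝓘(ℝ, Fin (n + 2) → ℝ) ν p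
  have hA : HasMFDerivAt (𝓡 n) 𝓘(ℝ, Fin (n + 2) → ℝ) σ p A :=
    (hσ.mdifferentiable (by simp) p).hasMFDerivAt
  have hB : HasMFDerivAt (𝓡 n) 𝓘(ℝ, Fin (n + 2) → ℝ) ν p B :=
    (hν.mdifferentiable (by simp) p).hasMFDerivAt
  have horth := hA.mink_smul_add_smul_apply_eq_zero hB hσσ hνν hσν (hnormal p)
  obtain ⟨hσσ_t, hνν_t, hσν_t⟩ :=
    mink_cosh_smul_add_sinh_smul_of_orthonormal (hσσ p) (hνν p) (hσν p) t
  have hsmall_t v (hv : v ≠ 0) :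
      mink n (Real.sinh t • A v + Real.cosh t • B v) (Real.sinh t • A v + Real.cosh t • B v) <
        mink n (Real.cosh t • A v + Real.sinh t • B v) (Real.cosh t • A v + Real.sinh t • B v) := by
    have : mink n (B v) (B v) < mink n (A v) (A v) := hsmall p v hv
    linarith [mink_cosh_smul_add_sinh_smul_sub t (A v) (B v)]
  rw [hA.mfderiv_smul_add_smul hB, hA.mfderiv_smul_add_smul hB]
  refine ⟨hσσ_t, last_cosh_smul_add_sinh_smul_pos (hσσ p) (hνν p) (hσν p) (hpos p) t,
    injective_of_mink_self_lt (N := (Real.sinh t • A + Real.cosh t • B).toLinearMap)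
      (hσσ_t.trans_lt (by norm_num)) (fun v ↦ (mink_comm _ _).trans (horth v ..)) hsmall_t,
    hνν_t, hσν_t,
    fun v ↦ horth v .., hsmall_t⟩

/-- If `σ : M → ℍ^{n+1}` is an immersion with unit normal `ν` having small principal
curvatures, then for every `t` the normal evolution `σ_t = cosh(t)σ + sinh(t)ν` is again
an immersion into `ℍ^{n+1}` with unit normal `ν_t = sinh(t)σ + cosh(t)ν` and small
principal curvatures. -/
theorem normal_evolution_small_principal_curvatures
    {n : ℕ} {M : Type*} [TopologicalSpace M]
    [ChartedSpace (EuclideanSpace ℝ (Fin n)) M]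
    [IsManifold (𝓡 n) (⊤ : ℕ∞) M]
    (σ ν : M → Fin (n + 2) → ℝ)
    (hσ : ContMDiff (𝓡 n) 𝓘(ℝ, Fin (n + 2) → ℝ) (⊤ : ℕ∞) σ)
    (hν : ContMDiff (𝓡 n) 𝓘(ℝ, Fin (n + 2) → ℝ) (⊤ : ℕ∞) ν)
    (hσσ : ∀ p, mink n (σ p) (σ p) = -1)
    (hpos : ∀ p, 0 < σ p (Fin.last (n + 1)))
    (hνν : ∀ p, mink n (ν p) (ν p) = 1)
    (hσν : ∀ p, mink n (σ p) (ν p) = 0)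
    (himm : ∀ p, Function.Injective (mfderiv (𝓡 n) 𝓘(ℝ, Fin (n + 2) → ℝ) σ p))
    (hnormal : ∀ p (v : EuclideanSpace ℝ (Fin n)),
      mink n (mfderiv (𝓡 n) 𝓘(ℝ, Fin (n + 2) → ℝ) σ p v) (ν p) = 0)
    (hsmall : ∀ p (v : EuclideanSpace ℝ (Fin n)), v ≠ 0 →
      mink n (mfderiv (𝓡 n) 𝓘(ℝ, Fin (n + 2) → ℝ) ν p v)
          (mfderiv (𝓡 n) 𝓘(ℝ, Fin (n + 2) → ℝ) ν p v) <
        mink n (mfderiv (𝓡 n) 𝓘(ℝ, Fin (n + 2) → ℝ) σ p v)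
          (mfderiv (𝓡 n) 𝓘(ℝ, Fin (n + 2) → ℝ) σ p v)) :
    ∀ (t : ℝ) (p : M),
      mink n (Real.cosh t • σ p + Real.sinh t • ν p)
        (Real.cosh t • σ p + Real.sinh t • ν p) = -1 ∧
      0 < (Real.cosh t • σ p + Real.sinh t • ν p) (Fin.last (n + 1)) ∧
      Function.Injective (mfderiv (𝓡 n) 𝓘(ℝ, Fin (n + 2) → ℝ)
        (fun q => Real.cosh t • σ q + Real.sinh t • ν q) p) ∧
      mink n (Real.sinh t • σ p + Real.cosh t • ν p)
        (Real.sinh t • σ p + Real.cosh t • ν p) = 1 ∧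
      mink n (Real.cosh t • σ p + Real.sinh t • ν p)
        (Real.sinh t • σ p + Real.cosh t • ν p) = 0 ∧
      (∀ v : EuclideanSpace ℝ (Fin n),
        mink n (mfderiv (𝓡 n) 𝓘(ℝ, Fin (n + 2) → ℝ)
            (fun q => Real.cosh t • σ q + Real.sinh t • ν q) p v)
          (Real.sinh t • σ p + Real.cosh t • ν p) = 0) ∧
      (∀ v : EuclideanSpace ℝ (Fin n), v ≠ 0 →
        mink n (mfderiv (𝓡 n) 𝓘(ℝ, Fin (n + 2) → ℝ)
            (fun q => Real.sinh t • σ q + Real.cosh t • ν q) p v)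
          (mfderiv (𝓡 n) 𝓘(ℝ, Fin (n + 2) → ℝ)
            (fun q => Real.sinh t • σ q + Real.cosh t • ν q) p v) <
        mink n (mfderiv (𝓡 n) 𝓘(ℝ, Fin (n + 2) → ℝ)
            (fun q => Real.cosh t • σ q + Real.sinh t • ν q) p v)
          (mfderiv (𝓡 n) 𝓘(ℝ, Fin (n + 2) → ℝ)
            (fun q => Real.cosh t • σ q + Real.sinh t • ν q) p v)) :=
  normal_evolution_small_principal_curvatures_general σ ν hσ hν hσσ hpos hνν hσν hnormal hsmall
end

section
/- Let M be a smooth n-manifold, let σ, ν : M → ℝ^{n+2} be an immersion of M into ℍ^{n+1} with unit normal ν, and suppose that for each p ∈ M there is a linear endomorphism B_p of T_pM (the shape operator) with d_pν = −d_pσ ∘ B_p. Fix t ∈ ℝ, set σ_t = cosh(t)σ + sinh(t)ν and ν_t = sinh(t)σ + cosh(t)ν, and assume id − tanh(t)·B_p is invertible. Then d_pσ_t = d_pσ ∘ (cosh(t)·id − sinh(t)·B_p), and d_pν_t = −d_pσ_t ∘ B_{t,p}, where B_{t,p} = (id − tanh(t)·B_p)^{-1} ∘ (B_p − tanh(t)·id);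 that is, B_{t,p} is the shape operator of the normal evolution σ_t. -/
open scoped Manifold

/-
Both identities are pointwise linear algebra. Differentiating `σ_t = cosh t • σ + sinh t • ν`
and `ν_t = sinh t • σ + cosh t • ν` and substituting `dν = -dσ ∘ B` gives
`dσ_t = dσ ∘ (cosh t - sinh t B)` and `dν_t = -dσ ∘ (cosh t B - sinh t)`. Since
`cosh t - sinh t B = cosh t (1 - tanh t B)`, the latter equals
`-dσ ∘ (cosh t - sinh t B) ∘ B_t = -dσ_t ∘ B_t` as soon as `1 - tanh t B` is invertible.
-/

section LinearCombination

variable {𝕜 : Type*} [NontriviallyNormedField 𝕜]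
  {E : Type*} [NormedAddCommGroup E] [NormedSpace 𝕜 E]
  {H : Type*} [TopologicalSpace H] {I : ModelWithCorners 𝕜 E H}
  {M : Type*} [TopologicalSpace M] [ChartedSpace H M]
  {F : Type*} [NormedAddCommGroup F] [NormedSpace 𝕜 F]
  {f g : M → F} {p : M} {f' g' : E →L[𝕜] F}

theorem HasMFDerivAt.mfderiv_linear_combination_apply (hf : HasMFDerivAt I 𝓘(𝕜, F) f p f')
    (hg : HasMFDerivAt I 𝓘(𝕜, F) g p g') (a b : 𝕜) (v : E) :
    mfderiv I 𝓘(𝕜, F) (fun q => a • f q + b • g q) p v = a • f' v + b • g' v := by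
  rw [show (fun q => a • f q + b • g q) = a • f + b • g from rfl,
    ((hf.const_smul a).add (hg.const_smul b)).mfderiv]
  rfl

end LinearCombination

theorem Real.cosh_mul_tanh (t : ℝ) : Real.cosh t * Real.tanh t = Real.sinh t := by
  rw [Real.tanh_eq_sinh_div_cosh, mul_div_cancel₀ _ (Real.cosh_pos t).ne']

section HyperbolicAlgebra

variable {A : Type*} [Ring A] [Algebra ℝ A]

theorem Real.cosh_smul_one_sub_sinh_smul (t : ℝ) (b : A) :
    Real.cosh t • (1 : A) - Real.sinh t • b = Real.cosh t • (1 - Real.tanh t • b) := by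
  rw [smul_sub, smul_smul, Real.cosh_mul_tanh]

theorem Real.cosh_smul_one_sub_sinh_smul_mul_inverse {t : ℝ} {b : A}
    (hb : IsUnit (1 - Real.tanh t • b)) :
    (Real.cosh t • (1 : A) - Real.sinh t • b) *
        (Ring.inverse (1 - Real.tanh t • b) * (b - Real.tanh t • 1)) =
      Real.cosh t • b - Real.sinh t • (1 : A) := by
  rw [Real.cosh_smul_one_sub_sinh_smul, smul_mul_assoc, Ring.mul_inverse_cancel_left _ _ hb,
    smul_sub, smul_smul, Real.cosh_mul_tanh]

end HyperbolicAlgebra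

theorem shape_operator_normal_evolution_general
    {n : ℕ} {M : Type*} [TopologicalSpace M]
    [ChartedSpace (EuclideanSpace ℝ (Fin n)) M]
    (σ ν : M → Fin (n + 2) → ℝ)
    (hσ : ContMDiff (𝓡 n) 𝓘(ℝ, Fin (n + 2) → ℝ) (⊤ : ℕ∞) σ)
    (hν : ContMDiff (𝓡 n) 𝓘(ℝ, Fin (n + 2) → ℝ) (⊤ : ℕ∞) ν)
    (B : M → Module.End ℝ (EuclideanSpace ℝ (Fin n)))
    (hshape : ∀ p (v : EuclideanSpace ℝ (Fin n)),
      mfderiv (𝓡 n) 𝓘(ℝ, Fin (n + 2) → ℝ) ν p v =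
        -(mfderiv (𝓡 n) 𝓘(ℝ, Fin (n + 2) → ℝ) σ p (B p v)))
    (t : ℝ) (p : M)
    (hinv : IsUnit ((1 : Module.End ℝ (EuclideanSpace ℝ (Fin n))) - Real.tanh t • B p)) :
    (∀ v : EuclideanSpace ℝ (Fin n),
      mfderiv (𝓡 n) 𝓘(ℝ, Fin (n + 2) → ℝ)
          (fun q => Real.cosh t • σ q + Real.sinh t • ν q) p v =
        mfderiv (𝓡 n) 𝓘(ℝ, Fin (n + 2) → ℝ) σ p
          ((Real.cosh t • (1 : Module.End ℝ (EuclideanSpace ℝ (Fin n))) -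
              Real.sinh t • B p) v)) ∧
    (∀ v : EuclideanSpace ℝ (Fin n),
      mfderiv (𝓡 n) 𝓘(ℝ, Fin (n + 2) → ℝ)
          (fun q => Real.sinh t • σ q + Real.cosh t • ν q) p v =
        -(mfderiv (𝓡 n) 𝓘(ℝ, Fin (n + 2) → ℝ)
            (fun q => Real.cosh t • σ q + Real.sinh t • ν q) p
          ((Ring.inverse ((1 : Module.End ℝ (EuclideanSpace ℝ (Fin n))) -
                Real.tanh t • B p) *
              (B p - Real.tanh t • (1 : Module.End ℝ (EuclideanSpace ℝ (Fin n))))) v))) := by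
  -- Typing the derivatives as maps into `Fin (n + 2) → ℝ` rather than into tangent spaces
  -- puts all the vectors below in one type, so they can be rewritten and combined.
  obtain ⟨Dσ, hDσ⟩ : ∃ D : EuclideanSpace ℝ (Fin n) →L[ℝ] (Fin (n + 2) → ℝ),
      HasMFDerivAt (𝓡 n) 𝓘(ℝ, Fin (n + 2) → ℝ) σ p D :=
    ⟨_, ((hσ p).mdifferentiableAt (by simp)).hasMFDerivAt⟩
  obtain ⟨Dν, hDν⟩ : ∃ D : EuclideanSpace ℝ (Fin n) →L[ℝ] (Fin (n + 2) → ℝ),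
      HasMFDerivAt (𝓡 n) 𝓘(ℝ, Fin (n + 2) → ℝ) ν p D :=
    ⟨_, ((hν p).mdifferentiableAt (by simp)).hasMFDerivAt⟩
  have hDν_eq (v : EuclideanSpace ℝ (Fin n)) : Dν v = -Dσ (B p v) := by
    have h := hshape p v
    rwa [hDσ.mfderiv, hDν.mfderiv] at h
  have hσt (v : EuclideanSpace ℝ (Fin n)) :
      mfderiv (𝓡 n) 𝓘(ℝ, Fin (n + 2) → ℝ)
          (fun q => Real.cosh t • σ q + Real.sinh t • ν q) p v =
        Dσ ((Real.cosh t • (1 : Module.End ℝ (EuclideanSpace ℝ (Fin n))) -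
              Real.sinh t • B p) v) := by
    rw [hDσ.mfderiv_linear_combination_apply hDν, hDν_eq]
    simp only [LinearMap.sub_apply, LinearMap.smul_apply, Module.End.one_apply, map_sub, map_smul]
    rw [smul_neg, ← sub_eq_add_neg]
  rw [hDσ.mfderiv]
  refine ⟨hσt, fun v => ?_⟩
  rw [hDσ.mfderiv_linear_combination_apply hDν, hσt, hDν_eq, ← Module.End.mul_apply,
    Real.cosh_smul_one_sub_sinh_smul_mul_inverse hinv]
  simp only [LinearMap.sub_apply, LinearMap.smul_apply, Module.End.one_apply, map_sub, map_smul]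
  rw [smul_neg, ← sub_eq_add_neg]
  exact (neg_sub _ _).symm

/-- If `σ : M → ℍ^{n+1}` is an immersion with unit normal `ν` and shape operator `B`
(`dν = −dσ ∘ B`), then the normal evolution `σ_t = cosh(t)σ + sinh(t)ν` has differential
`dσ_t = dσ ∘ (cosh(t)·id − sinh(t)·B)` and, provided `id − tanh(t)B` is invertible, its
normal `ν_t = sinh(t)σ + cosh(t)ν` satisfies `dν_t = −dσ_t ∘ B_t` with
`B_t = (id − tanh(t)B)⁻¹ ∘ (B − tanh(t)·id)`. -/
theorem shape_operator_normal_evolution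
    {n : ℕ} {M : Type*} [TopologicalSpace M]
    [ChartedSpace (EuclideanSpace ℝ (Fin n)) M]
    [IsManifold (𝓡 n) (⊤ : ℕ∞) M]
    (σ ν : M → Fin (n + 2) → ℝ)
    (hσ : ContMDiff (𝓡 n) 𝓘(ℝ, Fin (n + 2) → ℝ) (⊤ : ℕ∞) σ)
    (hν : ContMDiff (𝓡 n) 𝓘(ℝ, Fin (n + 2) → ℝ) (⊤ : ℕ∞) ν)
    (hσσ : ∀ p, mink n (σ p) (σ p) = -1)
    (hpos : ∀ p, 0 < σ p (Fin.last (n + 1)))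
    (hνν : ∀ p, mink n (ν p) (ν p) = 1)
    (hσν : ∀ p, mink n (σ p) (ν p) = 0)
    (himm : ∀ p, Function.Injective (mfderiv (𝓡 n) 𝓘(ℝ, Fin (n + 2) → ℝ) σ p))
    (hnormal : ∀ p (v : EuclideanSpace ℝ (Fin n)),
      mink n (mfderiv (𝓡 n) 𝓘(ℝ, Fin (n + 2) → ℝ) σ p v) (ν p) = 0)
    (B : M → Module.End ℝ (EuclideanSpace ℝ (Fin n)))
    (hshape : ∀ p (v : EuclideanSpace ℝ (Fin n)),
      mfderiv (𝓡 n) 𝓘(ℝ, Fin (n + 2) → ℝ) ν p v =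
        -(mfderiv (𝓡 n) 𝓘(ℝ, Fin (n + 2) → ℝ) σ p (B p v)))
    (t : ℝ) (p : M)
    (hinv : IsUnit ((1 : Module.End ℝ (EuclideanSpace ℝ (Fin n))) - Real.tanh t • B p)) :
    (∀ v : EuclideanSpace ℝ (Fin n),
      mfderiv (𝓡 n) 𝓘(ℝ, Fin (n + 2) → ℝ)
          (fun q => Real.cosh t • σ q + Real.sinh t • ν q) p v =
        mfderiv (𝓡 n) 𝓘(ℝ, Fin (n + 2) → ℝ) σ p
          ((Real.cosh t • (1 : Module.End ℝ (EuclideanSpace ℝ (Fin n))) -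
              Real.sinh t • B p) v)) ∧
    (∀ v : EuclideanSpace ℝ (Fin n),
      mfderiv (𝓡 n) 𝓘(ℝ, Fin (n + 2) → ℝ)
          (fun q => Real.sinh t • σ q + Real.cosh t • ν q) p v =
        -(mfderiv (𝓡 n) 𝓘(ℝ, Fin (n + 2) → ℝ)
            (fun q => Real.cosh t • σ q + Real.sinh t • ν q) p
          ((Ring.inverse ((1 : Module.End ℝ (EuclideanSpace ℝ (Fin n))) -
                Real.tanh t • B p) *
              (B p - Real.tanh t • (1 : Module.End ℝ (EuclideanSpace ℝ (Fin n))))) v))) :=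
  shape_operator_normal_evolution_general σ ν hσ hν B hshape t p hinv
end

section
/- Let n ≥ 1, let B be a symmetric real n×n matrix with ‖Bv‖ < ‖v‖ for every nonzero v ∈ ℝⁿ (equivalently, all eigenvalues of B lie in (−1,1)), let t ∈ ℝ and set τ = tanh(t). Then the matrix 1 − τB is invertible; setting B_t = (1 − τB)^{-1}(B − τ·1), the determinants det(1 + B_t) and det(1 − B_t) are strictly positive, and (1/(2n))·log( det(1 + B_t) / det(1 − B_t) ) = (1/(2n))·log( det(1 + B) / det(1 − B) ) − t. -/
/-!
With `τ = tanh t` and `A = 1 - τB`, one has `A (1 + B_t) = (1 - τ)(1 + B)` and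
`A (1 - B_t) = (1 + τ)(1 - B)`, so the factor `det A` cancels from the ratio
`det(1 + B_t) / det(1 - B_t)`, which therefore equals `det(1 + B) / det(1 - B)` times
`((1 - τ) / (1 + τ))ⁿ = exp(-2nt)`. Positivity of all determinants involved comes from
`1 - sB` being positive definite for `|s| ≤ 1`, since `|⟨x, Bx⟩| ≤ ‖x‖‖Bx‖ < ‖x‖²`.
-/

open Matrix Real

section Contraction

variable {ι : Type*} [Fintype ι] {B : Matrix ι ι ℝ}

lemma abs_dotProduct_mulVec_lt_of_contraction
    (hsmall : ∀ v : ι → ℝ, v ≠ 0 → ∑ i, (B *ᵥ v) i ^ 2 < ∑ i, v i ^ 2)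
    {x : ι → ℝ} (hx : x ≠ 0) : |x ⬝ᵥ B *ᵥ x| < x ⬝ᵥ x := by
  have hxx : 0 < x ⬝ᵥ x := by simpa using dotProduct_star_self_pos_iff.mpr hx
  have hsq : x ⬝ᵥ x = ∑ i, x i ^ 2 := by simp [dotProduct, sq]
  refine abs_lt_of_sq_lt_sq ?_ hxx.le
  calc (x ⬝ᵥ B *ᵥ x) ^ 2 ≤ (∑ i, x i ^ 2) * ∑ i, (B *ᵥ x) i ^ 2 :=
        Finset.sum_mul_sq_le_sq_mul_sq _ _ _
    _ < (x ⬝ᵥ x) * (x ⬝ᵥ x) := by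
        rw [← hsq]; exact mul_lt_mul_of_pos_left (hsq ▸ hsmall x hx) hxx
    _ = (x ⬝ᵥ x) ^ 2 := (sq _).symm

variable [DecidableEq ι]

lemma posDef_one_sub_smul_of_contraction (hB : B.IsSymm)
    (hsmall : ∀ v : ι → ℝ, v ≠ 0 → ∑ i, (B *ᵥ v) i ^ 2 < ∑ i, v i ^ 2)
    {s : ℝ} (hs : |s| ≤ 1) : (1 - s • B).PosDef := by
  refine posDef_iff_dotProduct_mulVec.mpr ⟨?_, fun x hx => ?_⟩
  · simpa [isHermitian_iff_isSymm] using isSymm_one.sub (hB.smul s)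
  · have hlt : s * (x ⬝ᵥ B *ᵥ x) < x ⬝ᵥ x :=
      calc s * (x ⬝ᵥ B *ᵥ x) ≤ |s| * |x ⬝ᵥ B *ᵥ x| := by rw [← abs_mul]; exact le_abs_self _
        _ ≤ |x ⬝ᵥ B *ᵥ x| := mul_le_of_le_one_left (abs_nonneg _) hs
        _ < x ⬝ᵥ x := abs_dotProduct_mulVec_lt_of_contraction hsmall hx
    simpa [sub_mulVec, smul_mulVec, dotProduct_sub, dotProduct_smul] using hlt

end Contraction

section NormalEvolution

variable {ι K : Type*} [Fintype ι] [DecidableEq ι] [Field K]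

/-- The shape operator `B_t` of the normal evolution at time `t`, where `τ = tanh t`. -/
noncomputable def normalEvolution (τ : K) (B : Matrix ι ι K) : Matrix ι ι K :=
  (1 - τ • B)⁻¹ * (B - τ • 1)

variable {τ : K} {B : Matrix ι ι K}

lemma one_sub_smul_mul_one_add_normalEvolution (h : IsUnit (1 - τ • B)) :
    (1 - τ • B) * (1 + normalEvolution τ B) = (1 - τ) • (1 + B) := by
  rw [normalEvolution, mul_add, mul_nonsing_inv_cancel_left _ _ ((isUnit_iff_isUnit_det _).mp h)]
  simp only [mul_one, sub_smul, smul_add, one_smul]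
  abel

lemma one_sub_smul_mul_one_sub_normalEvolution (h : IsUnit (1 - τ • B)) :
    (1 - τ • B) * (1 - normalEvolution τ B) = (1 + τ) • (1 - B) := by
  rw [normalEvolution, mul_sub, mul_nonsing_inv_cancel_left _ _ ((isUnit_iff_isUnit_det _).mp h)]
  simp only [mul_one, add_smul, smul_sub, one_smul]
  abel

lemma det_one_add_normalEvolution (h : IsUnit (1 - τ • B)) :
    (1 + normalEvolution τ B).det = (1 - τ) ^ Fintype.card ι * (1 + B).det / (1 - τ • B).det := by
  rw [eq_div_iff ((isUnit_iff_isUnit_det _).mp h).ne_zero, mul_comm, ← det_mul,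
    one_sub_smul_mul_one_add_normalEvolution h, det_smul]

lemma det_one_sub_normalEvolution (h : IsUnit (1 - τ • B)) :
    (1 - normalEvolution τ B).det = (1 + τ) ^ Fintype.card ι * (1 - B).det / (1 - τ • B).det := by
  rw [eq_div_iff ((isUnit_iff_isUnit_det _).mp h).ne_zero, mul_comm, ← det_mul,
    one_sub_smul_mul_one_sub_normalEvolution h, det_smul]

lemma det_one_add_normalEvolution_div_det_one_sub (h : IsUnit (1 - τ • B)) :
    (1 + normalEvolution τ B).det / (1 - normalEvolution τ B).det =
      ((1 - τ) / (1 + τ)) ^ Fintype.card ι * ((1 + B).det / (1 - B).det) := by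
  rw [det_one_add_normalEvolution h, det_one_sub_normalEvolution h,
    div_div_div_cancel_right₀ ((isUnit_iff_isUnit_det _).mp h).ne_zero, div_pow,
    mul_div_mul_comm]

end NormalEvolution

lemma one_sub_tanh_div_one_add_tanh (t : ℝ) : (1 - tanh t) / (1 + tanh t) = exp (-(2 * t)) := by
  have hc := (cosh_pos t).ne'
  rw [tanh_eq_sinh_div_cosh, exp_neg, two_mul, exp_add, ← cosh_add_sinh]
  field_simp
  linear_combination cosh_sq_sub_sinh_sq t

/-- If `B` is a symmetric real `n×n` matrix with `‖Bv‖ < ‖v‖` for all `v ≠ 0`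
(equivalently, all eigenvalues of `B` in `(-1,1)`), `t ∈ ℝ` and `τ = tanh t`, then
`1 − τB` is invertible, and setting `B_t = (1 − τB)⁻¹(B − τ·1)` the determinants
`det(1 + B_t)`, `det(1 − B_t)` are positive and
`(1/(2n))·log(det(1+B_t)/det(1−B_t)) = (1/(2n))·log(det(1+B)/det(1−B)) − t`. -/
theorem normal_evolution_log_det_identity
    (n : ℕ) (hn : 1 ≤ n) (B : Matrix (Fin n) (Fin n) ℝ) (hsymm : B.IsSymm)
    (hsmall : ∀ v : Fin n → ℝ, v ≠ 0 →
      ∑ i, (B.mulVec v i) ^ 2 < ∑ i, (v i) ^ 2)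
    (t : ℝ) :
    IsUnit (1 - Real.tanh t • B) ∧
    (0 < (1 + (1 - Real.tanh t • B)⁻¹ * (B - Real.tanh t • 1)).det ∧
     0 < (1 - (1 - Real.tanh t • B)⁻¹ * (B - Real.tanh t • 1)).det) ∧
    (1 / (2 * (n : ℝ))) *
        Real.log ((1 + (1 - Real.tanh t • B)⁻¹ * (B - Real.tanh t • 1)).det /
          (1 - (1 - Real.tanh t • B)⁻¹ * (B - Real.tanh t • 1)).det) =
      (1 / (2 * (n : ℝ))) * Real.log ((1 + B).det / (1 - B).det) - t := by
  have hA := posDef_one_sub_smul_of_contraction hsymm hsmall (abs_tanh_lt_one t).le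
  have hP : (1 + B).PosDef := by
    simpa using posDef_one_sub_smul_of_contraction hsymm hsmall (s := -1) (by norm_num)
  have hM : (1 - B).PosDef := by
    simpa using posDef_one_sub_smul_of_contraction hsymm hsmall (s := 1) (by norm_num)
  have hunit : IsUnit (1 - tanh t • B) := hA.isUnit
  rw [show (1 - tanh t • B)⁻¹ * (B - tanh t • 1) = normalEvolution (tanh t) B from rfl]
  refine ⟨hunit, ⟨?_, ?_⟩, ?_⟩
  · rw [det_one_add_normalEvolution hunit]
    exact div_pos (mul_pos (pow_pos (by linarith [tanh_lt_one t]) _) hP.det_pos) hA.det_pos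
  · rw [det_one_sub_normalEvolution hunit]
    exact div_pos (mul_pos (pow_pos (by linarith [neg_one_lt_tanh t]) _) hM.det_pos)
      hA.det_pos
  · rw [det_one_add_normalEvolution_div_det_one_sub hunit, one_sub_tanh_div_one_add_tanh,
      ← exp_nat_mul, log_mul (exp_ne_zero _) (div_pos hP.det_pos hM.det_pos).ne', log_exp,
      Fintype.card_fin]
    have hn0 : (n : ℝ) ≠ 0 := by exact_mod_cast Nat.one_le_iff_ne_zero.mp hn
    field_simp
    ring
end

section
/- Let M be a smooth n-manifold and let σ, ν : M → ℝ^{n+2} be an immersion of M into ℍ^{n+1} with unit normal ν having small principal curvatures. Let p, q ∈ M with p ≠ q, and suppose p and q are joined by a unit-speed geodesic of the first fundamental form of σ. Then there is no λ > 0 with σ(q) + ν(q) = λ·(σ(p) + ν(p)), and there is no λ > 0 with σ(q) − ν(q) = λ·(σ(p) − ν(p)); that is, the hyperbolic Gauss maps G⁺ = [σ + ν] and G⁻ = [σ − ν], with values in rays of the null cone, separate p and q. -/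
/-!
Along the unit-speed geodesic `γ = σ ∘ c` of the first fundamental form, `γ'' = γ + k ν` with
`k = -⟨γ', dν(γ')⟩`, and small principal curvatures give `|k| < 1`. For the null vector
`N = σ(p) ± ν(p)` the function `u = -⟨γ, N⟩` stays positive, and `|⟨ν, N⟩| ≤ u` yields
`u'' = u ∓ k ⟨ν, N⟩ > 0`. So `u' = -⟨γ', N⟩`, which vanishes at `p`, cannot vanish at `q`; but it
would if `σ(q) ± ν(q)` were a positive multiple of `N`, since `γ'` is orthogonal to `σ` and `ν`.
-/

open scoped Manifold

section Minkowski

variable {n : ℕ}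

@[simp]
lemma mink_add_left (x y z : Fin (n + 2) → ℝ) :
    mink n (x + y) z = mink n x z + mink n y z := by
  simp only [mink, Pi.add_apply, add_mul, Finset.sum_add_distrib]
  ring

@[simp]
lemma mink_smul_left (r : ℝ) (x y : Fin (n + 2) → ℝ) :
    mink n (r • x) y = r * mink n x y := by
  simp only [mink, Pi.smul_apply, smul_eq_mul, mul_assoc, ← Finset.mul_sum, mul_sub]

@[simp]
lemma mink_add_right (x y z : Fin (n + 2) → ℝ) :
    mink n x (y + z) = mink n x y + mink n x z := by
  rw [mink_comm, mink_add_left, mink_comm y, mink_comm z]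

@[simp]
lemma mink_smul_right (r : ℝ) (x y : Fin (n + 2) → ℝ) :
    mink n x (r • y) = r * mink n x y := by
  rw [mink_comm, mink_smul_left, mink_comm]

@[simp]
lemma mink_neg_right (x y : Fin (n + 2) → ℝ) : mink n x (-y) = -mink n x y := by
  simpa using mink_smul_right (-1) x y

@[simp]
lemma mink_zero_right (x : Fin (n + 2) → ℝ) : mink n x 0 = 0 := by
  simpa using mink_smul_right 0 x 0

lemma isBilinearMap_mink_s13 : IsBilinearMap ℝ (mink n) :=
  ⟨mink_add_left, mink_smul_left, mink_add_right, mink_smul_right⟩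

theorem HasDerivWithinAt.mink {f g : ℝ → Fin (n + 2) → ℝ} {f' g' : Fin (n + 2) → ℝ}
    {s : Set ℝ} {t : ℝ} (hf : HasDerivWithinAt f f' s t) (hg : HasDerivWithinAt g g' s t) :
    HasDerivWithinAt (fun u => mink n (f u) (g u)) (mink n f' (g t) + mink n (f t) g') s t := by
  rw [add_comm]
  exact isBilinearMap_mink_s13.toContinuousBilinearMap.hasDerivWithinAt_of_bilinear hf hg

lemma mink_self_pos_of_orthogonal {x z : Fin (n + 2) → ℝ} (hx : mink n x x < 0)
    (hxz : mink n x z = 0) (hz : z ≠ 0) : 0 < mink n z z := by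
  simp only [mink] at hx hxz ⊢
  set x₀ := x (Fin.last (n + 1))
  set z₀ := z (Fin.last (n + 1))
  set xx := ∑ i : Fin (n + 1), x i.castSucc * x i.castSucc
  set zz := ∑ i : Fin (n + 1), z i.castSucc * z i.castSucc
  set xz := ∑ i : Fin (n + 1), x i.castSucc * z i.castSucc
  have hcs : xz ^ 2 ≤ xx * zz := by
    simpa only [sq] using Finset.sum_mul_sq_le_sq_mul_sq Finset.univ
      (fun i : Fin (n + 1) => x i.castSucc) (fun i => z i.castSucc)
  have hxx : 0 ≤ xx := Finset.sum_nonneg fun i _ => mul_self_nonneg _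
  have hzz_coord (i : Fin (n + 1)) : z i.castSucc * z i.castSucc ≤ zz :=
    Finset.single_le_sum (f := fun i => z i.castSucc * z i.castSucc)
      (fun i _ => mul_self_nonneg _) (Finset.mem_univ i)
  by_contra! hzz
  have hx₀z₀ : x₀ ^ 2 * z₀ ^ 2 ≤ xx * z₀ ^ 2 :=
    calc x₀ ^ 2 * z₀ ^ 2 = xz ^ 2 := by rw [show xz = x₀ * z₀ by linarith]; ring
      _ ≤ xx * zz := hcs
      _ ≤ xx * z₀ ^ 2 := mul_le_mul_of_nonneg_left (by linarith) hxx
  have hz₀ : z₀ = 0 := pow_eq_zero_iff (n := 2) (by norm_num) |>.mp (by nlinarith [sq_nonneg z₀])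
  refine hz (funext fun i => Fin.lastCases hz₀ (fun j => ?_) i)
  show z j.castSucc = 0
  nlinarith [hzz_coord j, mul_self_nonneg (z j.castSucc)]

lemma mink_self_nonneg_of_orthogonal {x z : Fin (n + 2) → ℝ} (hx : mink n x x < 0)
    (hxz : mink n x z = 0) : 0 ≤ mink n z z := by
  rcases eq_or_ne z 0 with rfl | hz
  · simp
  · exact (mink_self_pos_of_orthogonal hx hxz hz).le

lemma sq_mink_le_of_orthogonal {x u w : Fin (n + 2) → ℝ} (hx : mink n x x < 0)
    (hu : mink n x u = 0) (hw : mink n x w = 0) :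
    mink n u w ^ 2 ≤ mink n u u * mink n w w := by
  have hquad (s : ℝ) : 0 ≤ mink n w w * (s * s) + 2 * mink n u w * s + mink n u u := by
    have := mink_self_nonneg_of_orthogonal hx (z := u + s • w) (by simp [hu, hw])
    simp only [mink_add_left, mink_add_right, mink_smul_left, mink_smul_right,
      mink_comm w u] at this
    linarith
  have := discrim_le_zero hquad
  rw [discrim] at this
  linarith

lemma abs_mink_lt_of_orthogonal {x u w : Fin (n + 2) → ℝ} (hx : mink n x x < 0)
    (hu : mink n x u = 0) (hw : mink n x w = 0) (hwu : mink n w w < mink n u u) :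
    |mink n u w| < mink n u u := by
  have hw₀ := mink_self_nonneg_of_orthogonal hx hw
  refine abs_lt_of_sq_lt_sq ?_ (by linarith)
  calc mink n u w ^ 2 ≤ mink n u u * mink n w w := sq_mink_le_of_orthogonal hx hu hw
    _ < mink n u u ^ 2 := by nlinarith

lemma sq_mink_le_of_null {s v N : Fin (n + 2) → ℝ} (hs : mink n s s = -1)
    (hv : mink n v v = 1) (hsv : mink n s v = 0) (hN : mink n N N = 0) :
    mink n v N ^ 2 ≤ mink n s N ^ 2 := by
  -- the component of `N` orthogonal to `s` and `v`
  set W := N + mink n s N • s + (-mink n v N) • v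
  have hsW : mink n s W = 0 := by
    simp only [W, mink_add_right, mink_smul_right, hs, hsv]
    ring
  have hWW : mink n W W = mink n s N ^ 2 - mink n v N ^ 2 := by
    simp only [W, mink_add_left, mink_add_right, mink_smul_left, mink_smul_right, hs, hv, hsv,
      hN, mink_comm v s, mink_comm N s, mink_comm N v]
    ring
  have := mink_self_nonneg_of_orthogonal (by rw [hs]; norm_num) hsW
  linarith

lemma mink_add_smul_neg_of_null {s v N : Fin (n + 2) → ℝ} {k : ℝ} (hs : mink n s s = -1)
    (hv : mink n v v = 1) (hsv : mink n s v = 0) (hN : mink n N N = 0) (hk : |k| < 1)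
    (hsN : mink n s N < 0) : mink n (s + k • v) N < 0 := by
  have hvN : |mink n v N| ≤ |mink n s N| := sq_le_sq.mp (sq_mink_le_of_null hs hv hsv hN)
  have hkvN : k * mink n v N < -mink n s N :=
    calc k * mink n v N ≤ |k| * |mink n v N| := (le_abs_self _).trans (abs_mul _ _).le
      _ ≤ |k| * |mink n s N| := by gcongr
      _ < |mink n s N| := mul_lt_of_lt_one_left (abs_pos.mpr hsN.ne) hk
      _ = -mink n s N := abs_of_neg hsN
  simp only [mink_add_left, mink_smul_left]
  linarith

end Minkowski

section Curves

open Set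

variable {n : ℕ} {a b : ℝ}

lemma mink_add_mink_eq_zero_of_forall_mink_eq {f g : ℝ → Fin (n + 2) → ℝ}
    {f' g' : Fin (n + 2) → ℝ} {t C : ℝ} (hab : a < b) (ht : t ∈ Icc a b)
    (hf : HasDerivWithinAt f f' (Icc a b) t) (hg : HasDerivWithinAt g g' (Icc a b) t)
    (hfg : ∀ s ∈ Icc a b, mink n (f s) (g s) = C) :
    mink n f' (g t) + mink n (f t) g' = 0 :=
  (uniqueDiffOn_Icc hab t ht).eq_deriv _ (hf.mink hg)
    ((hasDerivWithinAt_const t _ C).congr hfg (hfg t ht))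

structure IsCurveWithNormal (n : ℕ) (a b : ℝ) (γ γ' γ'' η : ℝ → Fin (n + 2) → ℝ) : Prop where
  hasDerivWithinAt : ∀ t ∈ Icc a b, HasDerivWithinAt γ (γ' t) (Icc a b) t
  hasDerivWithinAt_deriv : ∀ t ∈ Icc a b, HasDerivWithinAt γ' (γ'' t) (Icc a b) t
  mink_self : ∀ t ∈ Icc a b, mink n (γ t) (γ t) = -1
  mink_normal_self : ∀ t ∈ Icc a b, mink n (η t) (η t) = 1
  mink_normal : ∀ t ∈ Icc a b, mink n (γ t) (η t) = 0
  mink_deriv_normal : ∀ t ∈ Icc a b, mink n (γ' t) (η t) = 0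

/-- `γ'' - γ` is the covariant acceleration of `γ` in `ℍ^{n+1}`, so `|k| < 1` says that `γ` is
curved less than a horocycle. -/
structure IsSmallCurvatureCurve (n : ℕ) (a b : ℝ) (γ γ' γ'' η : ℝ → Fin (n + 2) → ℝ) : Prop
    extends IsCurveWithNormal n a b γ γ' γ'' η where
  exists_acc_eq : ∀ t ∈ Icc a b, ∃ k : ℝ, |k| < 1 ∧ γ'' t = γ t + k • η t

namespace IsCurveWithNormal

variable {γ γ' γ'' η : ℝ → Fin (n + 2) → ℝ}

lemma mink_deriv_self (h : IsCurveWithNormal n a b γ γ' γ'' η) (hab : a < b) {t : ℝ}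
    (ht : t ∈ Icc a b) : mink n (γ' t) (γ t) = 0 := by
  have := mink_add_mink_eq_zero_of_forall_mink_eq hab ht (h.hasDerivWithinAt t ht)
    (h.hasDerivWithinAt t ht) h.mink_self
  rw [mink_comm (γ t)] at this
  linarith

/-- Differentiating `⟨γ', η⟩ = 0` gives `k = -⟨γ', η'⟩`, which Cauchy–Schwarz on the spacelike
`γ^⊥` bounds by `⟨γ', γ'⟩ = 1`. -/
lemma abs_lt_one_of_sub_eq_smul (h : IsCurveWithNormal n a b γ γ' γ'' η) (hab : a < b) {t k : ℝ}
    (ht : t ∈ Icc a b) {η' : Fin (n + 2) → ℝ} (hη : HasDerivWithinAt η η' (Icc a b) t)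
    (hspeed : mink n (γ' t) (γ' t) = 1) (hsmall : mink n η' η' < 1)
    (hk : γ'' t - γ t = k • η t) : |k| < 1 := by
  have hγη' : mink n (γ t) η' = 0 := by
    have := mink_add_mink_eq_zero_of_forall_mink_eq hab ht (h.hasDerivWithinAt t ht) hη
      h.mink_normal
    rwa [h.mink_deriv_normal t ht, zero_add] at this
  have hk_eq : k = -mink n (γ' t) η' := by
    have := mink_add_mink_eq_zero_of_forall_mink_eq hab ht (h.hasDerivWithinAt_deriv t ht) hη
      h.mink_deriv_normal
    rw [show γ'' t = γ t + k • η t from (sub_eq_iff_eq_add'.mp hk), mink_add_left,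
      mink_smul_left, h.mink_normal t ht, h.mink_normal_self t ht] at this
    linarith
  have hγγ' : mink n (γ t) (γ' t) = 0 := by rw [mink_comm, h.mink_deriv_self hab ht]
  rw [hk_eq, abs_neg, ← hspeed]
  exact abs_mink_lt_of_orthogonal (by rw [h.mink_self t ht]; norm_num) hγγ' hγη'
    (hsmall.trans_eq hspeed.symm)

end IsCurveWithNormal

namespace IsSmallCurvatureCurve

variable {γ γ' γ'' η : ℝ → Fin (n + 2) → ℝ}

lemma neg (h : IsSmallCurvatureCurve n a b γ γ' γ'' η) :
    IsSmallCurvatureCurve n a b γ γ' γ'' (-η) where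
  __ := h
  mink_normal_self t ht := by simpa [mink_comm] using h.mink_normal_self t ht
  mink_normal t ht := by simpa using h.mink_normal t ht
  mink_deriv_normal t ht := by simpa using h.mink_deriv_normal t ht
  exists_acc_eq t ht := by
    obtain ⟨k, hk, hacc⟩ := h.exists_acc_eq t ht
    exact ⟨-k, by rwa [abs_neg], by simpa using hacc⟩

lemma mink_neg_of_null (h : IsSmallCurvatureCurve n a b γ γ' γ'' η) {N : Fin (n + 2) → ℝ}
    (hN : mink n N N = 0) (haN : mink n (γ a) N < 0) {t : ℝ} (ht : t ∈ Icc a b) :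
    mink n (γ t) N < 0 := by
  have hN₀ : N ≠ 0 := by
    rintro rfl
    simp at haN
  have hne : ∀ s ∈ Icc a b, mink n (γ s) N ≠ 0 := fun s hs hs₀ => by
    have := mink_self_pos_of_orthogonal (by rw [h.mink_self s hs]; norm_num) hs₀ hN₀
    linarith
  have hcont : ContinuousOn (fun s => mink n (γ s) N) (Icc a b) := fun s hs =>
    ((h.hasDerivWithinAt s hs).mink (hasDerivWithinAt_const s _ N)).continuousWithinAt
  by_contra! htN
  obtain ⟨s, hs, hs₀⟩ := isPreconnected_Icc.intermediate_value
    (left_mem_Icc.mpr (ht.1.trans ht.2)) ht hcont ⟨haN.le, htN⟩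
  exact hne s hs hs₀

/-- For a null `N`, the horofunction-like `u = -⟨γ, N⟩` stays positive and satisfies
`u'' = u - k ⟨η, N⟩ > 0`, so `u' = -⟨γ', N⟩` cannot vanish at both ends. -/
lemma mink_deriv_ne_zero_of_null (h : IsSmallCurvatureCurve n a b γ γ' γ'' η) (hab : a < b)
    {N : Fin (n + 2) → ℝ} (hN : mink n N N = 0) (haN : mink n (γ a) N < 0)
    (ha' : mink n (γ' a) N = 0) : mink n (γ' b) N ≠ 0 := by
  intro hb'
  have hderiv : ∀ t ∈ Icc a b,
      HasDerivWithinAt (fun s => mink n (γ' s) N) (mink n (γ'' t) N) (Icc a b) t := fun t ht => by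
    simpa using (h.hasDerivWithinAt_deriv t ht).mink (hasDerivWithinAt_const t _ N)
  obtain ⟨t, ht, ht₀⟩ := exists_hasDerivAt_eq_zero hab
    (fun t ht => (hderiv t ht).continuousWithinAt) (ha'.trans hb'.symm)
    (fun t ht => (hderiv t (Ioo_subset_Icc_self ht)).hasDerivAt (Icc_mem_nhds ht.1 ht.2))
  replace ht := Ioo_subset_Icc_self ht
  obtain ⟨k, hk, hacc⟩ := h.exists_acc_eq t ht
  have := mink_add_smul_neg_of_null (h.mink_self t ht) (h.mink_normal_self t ht)
    (h.mink_normal t ht) hN hk (h.mink_neg_of_null hN haN ht)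
  rw [← hacc, ht₀] at this
  exact lt_irrefl 0 this

theorem not_sameRay (h : IsSmallCurvatureCurve n a b γ γ' γ'' η) (hab : a < b) :
    ¬ SameRay ℝ (γ a + η a) (γ b + η b) := by
  intro hray
  have ha : a ∈ Icc a b := left_mem_Icc.mpr hab.le
  have hb : b ∈ Icc a b := right_mem_Icc.mpr hab.le
  have hpos : ∀ t ∈ Icc a b, mink n (γ t) (γ t + η t) = -1 := fun t ht => by
    simp [h.mink_self t ht, h.mink_normal t ht]
  have hvel : ∀ t ∈ Icc a b, mink n (γ' t) (γ t + η t) = 0 := fun t ht => by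
    simp [h.mink_deriv_self hab ht, h.mink_deriv_normal t ht]
  have hnull : mink n (γ a + η a) (γ a + η a) = 0 := by
    simp [h.mink_self a ha, h.mink_normal a ha, h.mink_normal_self a ha, mink_comm (η a)]
  have hne : ∀ t ∈ Icc a b, γ t + η t ≠ 0 := fun t ht ht₀ => by
    simpa [ht₀] using hpos t ht
  obtain ⟨r₁, r₂, hr₁, -, hr⟩ := hray.exists_pos (hne a ha) (hne b hb)
  refine h.mink_deriv_ne_zero_of_null hab hnull (by rw [hpos a ha]; norm_num) (hvel a ha) ?_
  have := congrArg (mink n (γ' b)) hr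
  rw [mink_smul_right, mink_smul_right, hvel b hb, mul_zero] at this
  exact (mul_eq_zero.mp this).resolve_left hr₁.ne'

end IsSmallCurvatureCurve

end Curves

theorem MDifferentiableAt.hasDerivAt_comp {E H M F : Type*} [NormedAddCommGroup E]
    [NormedSpace ℝ E] [TopologicalSpace H] [TopologicalSpace M] {I : ModelWithCorners ℝ E H}
    [ChartedSpace H M] [NormedAddCommGroup F] [NormedSpace ℝ F] {f : M → F} {c : ℝ → M}
    {t : ℝ} (hf : MDifferentiableAt I 𝓘(ℝ, F) f (c t)) (hc : MDifferentiableAt 𝓘(ℝ, ℝ) I c t) :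
    HasDerivAt (f ∘ c) (mfderiv I 𝓘(ℝ, F) f (c t) (mfderiv 𝓘(ℝ, ℝ) I c t 1)) t := by
  have hfc := mdifferentiableAt_iff_differentiableAt.mp (hf.comp t hc)
  convert hfc.hasDerivAt using 1
  rw [← fderiv_apply_one_eq_deriv, ← mfderiv_eq_fderiv, mfderiv_comp t hf hc]
  rfl

theorem gauss_maps_separate_points_general
    {n : ℕ} {M : Type*} [TopologicalSpace M]
    [ChartedSpace (EuclideanSpace ℝ (Fin n)) M]
    (σ ν : M → Fin (n + 2) → ℝ)
    (hσ : ContMDiff (𝓡 n) 𝓘(ℝ, Fin (n + 2) → ℝ) (⊤ : ℕ∞) σ)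
    (hν : ContMDiff (𝓡 n) 𝓘(ℝ, Fin (n + 2) → ℝ) (⊤ : ℕ∞) ν)
    (hσσ : ∀ p, mink n (σ p) (σ p) = -1)
    (hνν : ∀ p, mink n (ν p) (ν p) = 1)
    (hσν : ∀ p, mink n (σ p) (ν p) = 0)
    (hnormal : ∀ p (v : EuclideanSpace ℝ (Fin n)),
      mink n (mfderiv (𝓡 n) 𝓘(ℝ, Fin (n + 2) → ℝ) σ p v) (ν p) = 0)
    (hsmall : ∀ p (v : EuclideanSpace ℝ (Fin n)), v ≠ 0 →
      mink n (mfderiv (𝓡 n) 𝓘(ℝ, Fin (n + 2) → ℝ) ν p v)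
          (mfderiv (𝓡 n) 𝓘(ℝ, Fin (n + 2) → ℝ) ν p v) <
        mink n (mfderiv (𝓡 n) 𝓘(ℝ, Fin (n + 2) → ℝ) σ p v)
          (mfderiv (𝓡 n) 𝓘(ℝ, Fin (n + 2) → ℝ) σ p v))
    (p q : M)
    (a b : ℝ) (hab : a < b) (c : ℝ → M)
    (hc : ContMDiff 𝓘(ℝ, ℝ) (𝓡 n) (⊤ : ℕ∞) c)
    (hca : c a = p) (hcb : c b = q)
    (γ' γ'' : ℝ → Fin (n + 2) → ℝ)
    (hd1 : ∀ t ∈ Set.Icc a b,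
      HasDerivWithinAt (fun s => σ (c s)) (γ' t) (Set.Icc a b) t)
    (hd2 : ∀ t ∈ Set.Icc a b, HasDerivWithinAt γ' (γ'' t) (Set.Icc a b) t)
    (hspeed : ∀ t ∈ Set.Icc a b, mink n (γ' t) (γ' t) = 1)
    (hgeo : ∀ t ∈ Set.Icc a b, ∃ k : ℝ, γ'' t - σ (c t) = k • ν (c t)) :
    (¬ ∃ l : ℝ, 0 < l ∧ σ q + ν q = l • (σ p + ν p)) ∧
    (¬ ∃ l : ℝ, 0 < l ∧ σ q - ν q = l • (σ p - ν p)) := by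
  set v : ℝ → EuclideanSpace ℝ (Fin n) := fun t => mfderiv 𝓘(ℝ, ℝ) (𝓡 n) c t 1
  have hcv (f : M → Fin (n + 2) → ℝ) (hf : ContMDiff (𝓡 n) 𝓘(ℝ, Fin (n + 2) → ℝ) (⊤ : ℕ∞) f)
      (t : ℝ) : HasDerivAt (f ∘ c) (mfderiv (𝓡 n) 𝓘(ℝ, Fin (n + 2) → ℝ) f (c t) (v t)) t :=
    (hf.mdifferentiableAt (by simp)).hasDerivAt_comp (hc.mdifferentiableAt (by simp))
  have hγ' : ∀ t ∈ Set.Icc a b, γ' t = mfderiv (𝓡 n) 𝓘(ℝ, Fin (n + 2) → ℝ) σ (c t) (v t) :=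
    fun t ht => (uniqueDiffOn_Icc hab t ht).eq_deriv _ (hd1 t ht) (hcv σ hσ t).hasDerivWithinAt
  have hcurve : IsCurveWithNormal n a b (σ ∘ c) γ' γ'' (ν ∘ c) :=
    ⟨hd1, hd2, fun _ _ => hσσ _, fun _ _ => hνν _, fun _ _ => hσν _,
      fun t ht => by rw [hγ' t ht]; exact hnormal _ _⟩
  have hsmall_curve : IsSmallCurvatureCurve n a b (σ ∘ c) γ' γ'' (ν ∘ c) := by
    refine ⟨hcurve, fun t ht => ?_⟩
    obtain ⟨k, hk⟩ := hgeo t ht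
    have hv : v t ≠ 0 := fun hv => by
      have hγ'₀ : γ' t = 0 := by
        rw [hγ' t ht, hv]
        exact map_zero _
      simpa [hγ'₀] using hspeed t ht
    refine ⟨k, hcurve.abs_lt_one_of_sub_eq_smul hab ht (hcv ν hν t).hasDerivWithinAt
      (hspeed t ht) ?_ hk, sub_eq_iff_eq_add'.mp hk⟩
    simpa [← hγ' t ht, hspeed t ht] using hsmall (c t) (v t) hv
  constructor
  · rintro ⟨l, hl, heq⟩
    refine hsmall_curve.not_sameRay hab ?_
    simp only [Function.comp_apply, hca, hcb, heq]
    exact SameRay.sameRay_pos_smul_right _ hl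
  · rintro ⟨l, hl, heq⟩
    refine hsmall_curve.neg.not_sameRay hab ?_
    simp only [Function.comp_apply, Pi.neg_apply, ← sub_eq_add_neg, hca, hcb, heq]
    exact SameRay.sameRay_pos_smul_right _ hl

/-- If `σ : M → ℍ^{n+1}` is an immersion with unit normal `ν` having small principal
curvatures, and `p ≠ q` are joined by a unit-speed geodesic of the first fundamental
form of `σ`, then the hyperbolic Gauss maps `G⁺ = [σ + ν]` and `G⁻ = [σ − ν]`, with
values in rays of the null cone, separate `p` and `q`. -/
theorem gauss_maps_separate_points
    {n : ℕ} {M : Type*} [TopologicalSpace M]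
    [ChartedSpace (EuclideanSpace ℝ (Fin n)) M]
    [IsManifold (𝓡 n) (⊤ : ℕ∞) M]
    (σ ν : M → Fin (n + 2) → ℝ)
    (hσ : ContMDiff (𝓡 n) 𝓘(ℝ, Fin (n + 2) → ℝ) (⊤ : ℕ∞) σ)
    (hν : ContMDiff (𝓡 n) 𝓘(ℝ, Fin (n + 2) → ℝ) (⊤ : ℕ∞) ν)
    (hσσ : ∀ p, mink n (σ p) (σ p) = -1)
    (hpos : ∀ p, 0 < σ p (Fin.last (n + 1)))
    (hνν : ∀ p, mink n (ν p) (ν p) = 1)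
    (hσν : ∀ p, mink n (σ p) (ν p) = 0)
    (himm : ∀ p, Function.Injective (mfderiv (𝓡 n) 𝓘(ℝ, Fin (n + 2) → ℝ) σ p))
    (hnormal : ∀ p (v : EuclideanSpace ℝ (Fin n)),
      mink n (mfderiv (𝓡 n) 𝓘(ℝ, Fin (n + 2) → ℝ) σ p v) (ν p) = 0)
    (hsmall : ∀ p (v : EuclideanSpace ℝ (Fin n)), v ≠ 0 →
      mink n (mfderiv (𝓡 n) 𝓘(ℝ, Fin (n + 2) → ℝ) ν p v)
          (mfderiv (𝓡 n) 𝓘(ℝ, Fin (n + 2) → ℝ) ν p v) <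
        mink n (mfderiv (𝓡 n) 𝓘(ℝ, Fin (n + 2) → ℝ) σ p v)
          (mfderiv (𝓡 n) 𝓘(ℝ, Fin (n + 2) → ℝ) σ p v))
    (p q : M) (hpq : p ≠ q)
    (a b : ℝ) (hab : a < b) (c : ℝ → M)
    (hc : ContMDiff 𝓘(ℝ, ℝ) (𝓡 n) (⊤ : ℕ∞) c)
    (hca : c a = p) (hcb : c b = q)
    (γ' γ'' : ℝ → Fin (n + 2) → ℝ)
    (hd1 : ∀ t ∈ Set.Icc a b,
      HasDerivWithinAt (fun s => σ (c s)) (γ' t) (Set.Icc a b) t)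
    (hd2 : ∀ t ∈ Set.Icc a b, HasDerivWithinAt γ' (γ'' t) (Set.Icc a b) t)
    (hspeed : ∀ t ∈ Set.Icc a b, mink n (γ' t) (γ' t) = 1)
    (hgeo : ∀ t ∈ Set.Icc a b, ∃ k : ℝ, γ'' t - σ (c t) = k • ν (c t)) :
    (¬ ∃ l : ℝ, 0 < l ∧ σ q + ν q = l • (σ p + ν p)) ∧
    (¬ ∃ l : ℝ, 0 < l ∧ σ q - ν q = l • (σ p - ν p)) :=
  gauss_maps_separate_points_general σ ν hσ hν hσσ hνν hσν hnormal hsmall p q a b hab c hc hca hcb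
    γ' γ'' hd1 hd2 hspeed hgeo
end

section
/- Let M be a smooth manifold and σ, ν : M → ℝ^{n+2} smooth maps with ⟨σ(p),σ(p)⟩ = −1, σ(p)_{n+2} > 0, ⟨ν(p),ν(p)⟩ = 1 and ⟨σ(p),ν(p)⟩ = 0 for all p ∈ M. If at a point p ∈ M the quadratic form v ↦ ⟨d_pσ(v), d_pσ(v)⟩ − ⟨d_pν(v), d_pν(v)⟩ on T_pM is positive definite, then d_pσ is injective. -/
/-!
If `dσ(v) = 0`, differentiating `⟨σ, ν⟩ = 0` gives `⟨σ, dν(v)⟩ = 0`. Since `σ` is timelike,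
the reverse Cauchy–Schwarz inequality makes its Minkowski orthogonal complement spacelike, so
`⟨dν(v), dν(v)⟩ ≥ 0`, and the quadratic form `⟨dσ(v), dσ(v)⟩ − ⟨dν(v), dν(v)⟩ = −⟨dν(v), dν(v)⟩`
is not positive at `v`; hence `v = 0`.
-/

open scoped Manifold

section

variable {𝕜 : Type*} [NontriviallyNormedField 𝕜]
  {E : Type*} [NormedAddCommGroup E] [NormedSpace 𝕜 E]
  {H : Type*} [TopologicalSpace H] {I : ModelWithCorners 𝕜 E H}
  {M : Type*} [TopologicalSpace M] [ChartedSpace H M]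
  {F₁ F₂ G : Type*} [NormedAddCommGroup F₁] [NormedSpace 𝕜 F₁]
  [NormedAddCommGroup F₂] [NormedSpace 𝕜 F₂] [NormedAddCommGroup G] [NormedSpace 𝕜 G]

theorem IsBoundedBilinearMap.mfderiv_prodMk_apply {B : F₁ × F₂ → G}
    (hB : IsBoundedBilinearMap 𝕜 B) {f : M → F₁} {g : M → F₂} {p : M}
    (hf : MDifferentiableAt I 𝓘(𝕜, F₁) f p) (hg : MDifferentiableAt I 𝓘(𝕜, F₂) g p)
    (v : TangentSpace I p) :
    mfderiv I 𝓘(𝕜, G) (fun q => B (f q, g q)) p v =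
      B (f p, mfderiv I 𝓘(𝕜, F₂) g p v) + B (mfderiv I 𝓘(𝕜, F₁) f p v, g p) := by
  have hfg : HasMFDerivAt I 𝓘(𝕜, F₁ × F₂) (fun q => (f q, g q)) p
      ((mfderiv I 𝓘(𝕜, F₁) f p).prod (mfderiv I 𝓘(𝕜, F₂) g p)) :=
    hf.hasMFDerivAt.prodMk hg.hasMFDerivAt
  exact (DFunLike.congr_fun ((hB.hasFDerivAt (f p, g p)).hasMFDerivAt.comp p hfg).mfderiv v).trans
    (hB.deriv_apply _ _)

end

theorem mink_isBilinearMap (n : ℕ) : IsBilinearMap ℝ (mink n) where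
  add_left x₁ x₂ y := by
    simp only [mink, Pi.add_apply, add_mul, Finset.sum_add_distrib]; ring
  smul_left c x y := by
    simp only [mink, Pi.smul_apply, smul_eq_mul, mul_assoc, ← Finset.mul_sum]; ring
  add_right x y₁ y₂ := by
    simp only [mink, Pi.add_apply, mul_add, Finset.sum_add_distrib]; ring
  smul_right c x y := by
    simp only [mink, Pi.smul_apply, smul_eq_mul, mul_left_comm _ c, ← Finset.mul_sum]; ring

theorem mink_zero_left (n : ℕ) (y : Fin (n + 2) → ℝ) : mink n 0 y = 0 :=
  (mink_isBilinearMap n).toLinearMap.map_zero₂ y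

theorem mink_isBoundedBilinearMap (n : ℕ) :
    IsBoundedBilinearMap ℝ fun q : (Fin (n + 2) → ℝ) × (Fin (n + 2) → ℝ) => mink n q.1 q.2 :=
  (mink_isBilinearMap n).toContinuousBilinearMap.isBoundedBilinearMap

theorem mink_self_nonneg_of_mink_eq_zero_s15 {n : ℕ} {s w : Fin (n + 2) → ℝ}
    (hs : mink n s s < 0) (hsw : mink n s w = 0) : 0 ≤ mink n w w := by
  have hcs := Finset.sum_mul_sq_le_sq_mul_sq Finset.univ
    (fun i : Fin (n + 1) => s i.castSucc) (fun i : Fin (n + 1) => w i.castSucc)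
  simp only [mink, ← pow_two] at hs hsw hcs ⊢
  set A := ∑ i : Fin (n + 1), s i.castSucc ^ 2
  set B := ∑ i : Fin (n + 1), w i.castSucc ^ 2
  set t := s (Fin.last (n + 1))
  set u := w (Fin.last (n + 1))
  have hA : 0 ≤ A := by positivity
  have hB : 0 ≤ B := by positivity
  have ht : 0 < t ^ 2 := by linarith
  -- Cauchy–Schwarz on the spatial parts, with `⟨s, w⟩ = 0` read as `s' · w' = t u`
  have key : (t ^ 2 - A) * B ≤ t ^ 2 * (B - u ^ 2) := by
    rw [sub_eq_zero.mp hsw] at hcs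
    nlinarith
  have hBu : 0 ≤ B - u ^ 2 :=
    nonneg_of_mul_nonneg_right ((mul_nonneg (by linarith) hB).trans key) ht
  linarith

theorem riemannian_pullback_implies_immersion_general
    {n : ℕ} {M : Type*} [TopologicalSpace M]
    [ChartedSpace (EuclideanSpace ℝ (Fin n)) M]
    (σ ν : M → Fin (n + 2) → ℝ)
    (hσ : ContMDiff (𝓡 n) 𝓘(ℝ, Fin (n + 2) → ℝ) (⊤ : ℕ∞) σ)
    (hν : ContMDiff (𝓡 n) 𝓘(ℝ, Fin (n + 2) → ℝ) (⊤ : ℕ∞) ν)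
    (hσσ : ∀ p, mink n (σ p) (σ p) = -1)
    (hσν : ∀ p, mink n (σ p) (ν p) = 0)
    (p : M)
    (hdef : ∀ v : EuclideanSpace ℝ (Fin n), v ≠ 0 →
      0 < mink n (mfderiv (𝓡 n) 𝓘(ℝ, Fin (n + 2) → ℝ) σ p v)
            (mfderiv (𝓡 n) 𝓘(ℝ, Fin (n + 2) → ℝ) σ p v) -
          mink n (mfderiv (𝓡 n) 𝓘(ℝ, Fin (n + 2) → ℝ) ν p v)
            (mfderiv (𝓡 n) 𝓘(ℝ, Fin (n + 2) → ℝ) ν p v)) :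
    Function.Injective (mfderiv (𝓡 n) 𝓘(ℝ, Fin (n + 2) → ℝ) σ p) := by
  have hσν_deriv : ∀ v, mink n (σ p) (mfderiv (𝓡 n) 𝓘(ℝ, Fin (n + 2) → ℝ) ν p v) +
      mink n (mfderiv (𝓡 n) 𝓘(ℝ, Fin (n + 2) → ℝ) σ p v) (ν p) = 0 := fun v => by
    rw [← (mink_isBoundedBilinearMap n).mfderiv_prodMk_apply (hσ.mdifferentiableAt (by simp))
      (hν.mdifferentiableAt (by simp)), funext hσν, mfderiv_const]
    rfl
  refine (injective_iff_map_eq_zero _).mpr fun v hσv => by_contra fun hv => ?_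
  have hdσ_zero : ∀ y, mink n (mfderiv (𝓡 n) 𝓘(ℝ, Fin (n + 2) → ℝ) σ p v) y = 0 := fun y => by
    rw [hσv]
    exact mink_zero_left n y
  have hσ_dν : mink n (σ p) (mfderiv (𝓡 n) 𝓘(ℝ, Fin (n + 2) → ℝ) ν p v) = 0 := by
    simpa only [hdσ_zero, add_zero] using hσν_deriv v
  linarith [hdef v hv, hdσ_zero (mfderiv (𝓡 n) 𝓘(ℝ, Fin (n + 2) → ℝ) σ p v),
    mink_self_nonneg_of_mink_eq_zero_s15 (by simp [hσσ]) hσ_dν]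

/-- If `(σ,ν)` is a smooth map to `T¹ℍ^{n+1}` and at a point `p` the quadratic form
`v ↦ ⟨dσ(v),dσ(v)⟩ − ⟨dν(v),dν(v)⟩` (the pullback of the para-Sasaki metric by the
lift) is positive definite, then `dσ` is injective at `p`. -/
theorem riemannian_pullback_implies_immersion
    {n : ℕ} {M : Type*} [TopologicalSpace M]
    [ChartedSpace (EuclideanSpace ℝ (Fin n)) M]
    [IsManifold (𝓡 n) (⊤ : ℕ∞) M]
    (σ ν : M → Fin (n + 2) → ℝ)
    (hσ : ContMDiff (𝓡 n) 𝓘(ℝ, Fin (n + 2) → ℝ) (⊤ : ℕ∞) σ)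
    (hν : ContMDiff (𝓡 n) 𝓘(ℝ, Fin (n + 2) → ℝ) (⊤ : ℕ∞) ν)
    (hσσ : ∀ p, mink n (σ p) (σ p) = -1)
    (hpos : ∀ p, 0 < σ p (Fin.last (n + 1)))
    (hνν : ∀ p, mink n (ν p) (ν p) = 1)
    (hσν : ∀ p, mink n (σ p) (ν p) = 0)
    (p : M)
    (hdef : ∀ v : EuclideanSpace ℝ (Fin n), v ≠ 0 →
      0 < mink n (mfderiv (𝓡 n) 𝓘(ℝ, Fin (n + 2) → ℝ) σ p v)
            (mfderiv (𝓡 n) 𝓘(ℝ, Fin (n + 2) → ℝ) σ p v) -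
          mink n (mfderiv (𝓡 n) 𝓘(ℝ, Fin (n + 2) → ℝ) ν p v)
            (mfderiv (𝓡 n) 𝓘(ℝ, Fin (n + 2) → ℝ) ν p v)) :
    Function.Injective (mfderiv (𝓡 n) 𝓘(ℝ, Fin (n + 2) → ℝ) σ p) :=
  riemannian_pullback_implies_immersion_general σ ν hσ hν hσσ hσν p hdef
end

section
/- On ℝ³ with the Minkowski form ⟨x,y⟩ = x₁y₁ + x₂y₂ − x₃y₃, define the Lorentzian cross product a ⊠ b = (a₂b₃ − a₃b₂, a₃b₁ − a₁b₃, a₂b₁ − a₁b₂), and define smooth vector fields X, Y on ℝ³ × ℝ³ by X(x,v) = (x ⊠ v, 0) and Y(x,v) = (0, x ⊠ v). Then at every point (x,v) with ⟨x,x⟩ = −1, ⟨v,v⟩ = 1 and ⟨x,v⟩ = 0, one has DY_{(x,v)}(X(x,v)) − DX_{(x,v)}(Y(x,v)) = (v, x), where D denotes the Fréchet derivative; that is, the Lie bracket of X and Y at points of T¹ℍ² equals the generator χ = (v,x) of the geodesic flow (up to sign convention for the bracket). -/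
/-- The Minkowski bilinear form on `ℝ³`: `⟨x,y⟩ = x₁y₁ + x₂y₂ − x₃y₃`. -/
noncomputable def mink3 (x y : Fin 3 → ℝ) : ℝ :=
  x 0 * y 0 + x 1 * y 1 - x 2 * y 2

/-- The Lorentzian cross product
`a ⊠ b = (a₂b₃ − a₃b₂, a₃b₁ − a₁b₃, a₂b₁ − a₁b₂)` (1-based indices). -/
noncomputable def lcross (a b : Fin 3 → ℝ) : Fin 3 → ℝ :=
  ![a 1 * b 2 - a 2 * b 1, a 2 * b 0 - a 0 * b 2, a 1 * b 0 - a 0 * b 1]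

/-- The vector field `X(x,v) = (x ⊠ v, 0)` (horizontal lift of `x ⊠ v`). -/
noncomputable def Xfield (p : (Fin 3 → ℝ) × (Fin 3 → ℝ)) :
    (Fin 3 → ℝ) × (Fin 3 → ℝ) :=
  (lcross p.1 p.2, 0)

/-- The vector field `Y(x,v) = (0, x ⊠ v)` (vertical lift of `x ⊠ v`). -/
noncomputable def Yfield (p : (Fin 3 → ℝ) × (Fin 3 → ℝ)) :
    (Fin 3 → ℝ) × (Fin 3 → ℝ) :=
  (0, lcross p.1 p.2)

/-!
Since `⊠` is bilinear, `D Y_(x,v) (h,k) = (0, x ⊠ k + h ⊠ v)` and similarly for `X`, so the bracket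
is `(−x ⊠ (x ⊠ v), (x ⊠ v) ⊠ v)`. The expansion `a ⊠ (b ⊠ c) = ⟨a,b⟩c − ⟨a,c⟩b` together with
`⟨x,x⟩ = −1`, `⟨v,v⟩ = 1`, `⟨x,v⟩ = 0` turns this into `(v, x)`.
-/

theorem mink3_comm (x y : Fin 3 → ℝ) : mink3 x y = mink3 y x := by
  unfold mink3; ring

theorem lcross_swap (a b : Fin 3 → ℝ) : lcross b a = -lcross a b := by
  ext i; fin_cases i <;> simp [lcross] <;> ring

@[simp]
theorem lcross_zero_left (b : Fin 3 → ℝ) : lcross 0 b = 0 := by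
  ext i; fin_cases i <;> simp [lcross]

@[simp]
theorem lcross_zero_right (a : Fin 3 → ℝ) : lcross a 0 = 0 := by
  rw [lcross_swap, lcross_zero_left, neg_zero]

theorem lcross_lcross (a b c : Fin 3 → ℝ) :
    lcross a (lcross b c) = mink3 a b • c - mink3 a c • b := by
  ext i; fin_cases i <;> simp [lcross, mink3] <;> ring

theorem isBilinearMap_lcross : IsBilinearMap ℝ lcross where
  add_left a a' b := by ext i; fin_cases i <;> simp [lcross] <;> ring
  smul_left c a b := by ext i; fin_cases i <;> simp [lcross] <;> ring
  add_right a b b' := by ext i; fin_cases i <;> simp [lcross] <;> ring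
  smul_right c a b := by ext i; fin_cases i <;> simp [lcross] <;> ring

theorem isBoundedBilinearMap_lcross :
    IsBoundedBilinearMap ℝ fun p : (Fin 3 → ℝ) × (Fin 3 → ℝ) => lcross p.1 p.2 :=
  isBilinearMap_lcross.toContinuousBilinearMap.isBoundedBilinearMap

theorem fderiv_Xfield_apply (p q : (Fin 3 → ℝ) × (Fin 3 → ℝ)) :
    fderiv ℝ Xfield p q = (lcross p.1 q.2 + lcross q.1 p.2, 0) := by
  have h : HasFDerivAt Xfield _ p :=
    (isBoundedBilinearMap_lcross.hasFDerivAt p).prodMk (hasFDerivAt_const 0 p)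
  rw [h.fderiv]
  simp [IsBoundedBilinearMap.deriv_apply]

theorem fderiv_Yfield_apply (p q : (Fin 3 → ℝ) × (Fin 3 → ℝ)) :
    fderiv ℝ Yfield p q = (0, lcross p.1 q.2 + lcross q.1 p.2) := by
  have h : HasFDerivAt Yfield _ p :=
    (hasFDerivAt_const 0 p).prodMk (isBoundedBilinearMap_lcross.hasFDerivAt p)
  rw [h.fderiv]
  simp [IsBoundedBilinearMap.deriv_apply]

/-- At every point of `T¹ℍ²`, the Lie bracket of the horizontal and vertical lifts
`X(x,v) = (x ⊠ v, 0)` and `Y(x,v) = (0, x ⊠ v)` equals the generator `χ = (v,x)` of the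
geodesic flow. -/
theorem lie_bracket_eq_geodesic_generator
    (x v : Fin 3 → ℝ)
    (hx : mink3 x x = -1) (hv : mink3 v v = 1) (hxv : mink3 x v = 0) :
    fderiv ℝ Yfield (x, v) (Xfield (x, v)) -
      fderiv ℝ Xfield (x, v) (Yfield (x, v)) = (v, x) := by
  rw [fderiv_Yfield_apply, fderiv_Xfield_apply]
  simp only [Xfield, Yfield, lcross_zero_left, lcross_zero_right, zero_add, add_zero]
  rw [lcross_swap v (lcross x v), lcross_lcross, lcross_lcross, mink3_comm v x, hx, hv, hxv]
  ext <;> simp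
end
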